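/- Let γ > 1, Σ ∈ ℝ, and let U ⊆ ℝ² be an open set. Suppose w : U → ℝ is C¹, satisfies ∂_t w + w ∂_x w = 0 on U, and satisfies w(t,x) < Σ on U. Define ρ(t,x) := [ (γ−1)(Σ − w(t,x)) / (√γ (γ+1)) ]^{2/(γ−1)} and u(t,x) := Σ − (2√γ/(γ−1)) · ρ(t,x)^{(γ−1)/2}. Then ρ > 0 on U and the pair (ρ, u) satisfies the one-dimensional isentropic Euler equations on U: ∂_t ρ + ∂_x(ρ u) = 0 and ∂_t(ρ u) + ∂_x(ρ u² + ρ^γ) = 0. -/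

import Mathlib

/-- Density of the 1-simple wave with Riemann invariant `Σ` built from a
solution `w` of the Burgers equation:
`ρ = ((γ-1)(Σ - w)/(√γ (γ+1)))^(2/(γ-1))`. -/
noncomputable def rhoSW (γ Sig : ℝ) (w : ℝ × ℝ → ℝ) : ℝ × ℝ → ℝ :=
  fun q => ((γ - 1) * (Sig - w q) / (Real.sqrt γ * (γ + 1))) ^ (2 / (γ - 1))

/-- Velocity of the 1-simple wave:
`u = Σ - (2√γ/(γ-1)) ρ^((γ-1)/2)`. -/
noncomputable def uSW (γ Sig : ℝ) (w : ℝ × ℝ → ℝ) : ℝ × ℝ → ℝ :=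
  fun q => Sig - 2 * Real.sqrt γ / (γ - 1) * (rhoSW γ Sig w q) ^ ((γ - 1) / 2)

noncomputable def gSW (γ Sig : ℝ) : ℝ → ℝ :=
  fun y => ((γ - 1) * (Sig - y) / (Real.sqrt γ * (γ + 1))) ^ (2 / (γ - 1))

noncomputable def hSW (γ Sig : ℝ) : ℝ → ℝ :=
  fun y => Sig - 2 * Real.sqrt γ / (γ - 1) * (gSW γ Sig y) ^ ((γ - 1) / 2)

/-- The 1-simple wave solves the isentropic Euler equations: if `w` is `C¹` on an
open set `U ⊆ ℝ²` (coordinates `(t,x)`), `∂ₜw + w ∂ₓw = 0` and `w < Σ` on `U`, then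
`ρ > 0` and `(ρ, u)` defined above satisfy
`∂ₜρ + ∂ₓ(ρu) = 0` and `∂ₜ(ρu) + ∂ₓ(ρu² + ρ^γ) = 0` on `U`. -/
theorem stmt_14 (γ Sig : ℝ) (hγ : 1 < γ) (U : Set (ℝ × ℝ)) (hU : IsOpen U)
    (w : ℝ × ℝ → ℝ) (hw : ContDiffOn ℝ 1 w U)
    (hpde : ∀ q ∈ U, fderiv ℝ w q (1, 0) + w q * fderiv ℝ w q (0, 1) = 0)
    (hwS : ∀ q ∈ U, w q < Sig) :
    ∀ q ∈ U,
      0 < rhoSW γ Sig w q ∧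
      DifferentiableAt ℝ (rhoSW γ Sig w) q ∧
      DifferentiableAt ℝ (uSW γ Sig w) q ∧
      fderiv ℝ (rhoSW γ Sig w) q (1, 0)
          + fderiv ℝ (fun z => rhoSW γ Sig w z * uSW γ Sig w z) q (0, 1) = 0 ∧
      fderiv ℝ (fun z => rhoSW γ Sig w z * uSW γ Sig w z) q (1, 0)
          + fderiv ℝ
              (fun z => rhoSW γ Sig w z * (uSW γ Sig w z) ^ 2 + (rhoSW γ Sig w z) ^ γ)
              q (0, 1) = 0 := by
  intro q hq
  have hγ0 : (0:ℝ) < γ := lt_trans one_pos hγ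
  have hγ1 : (0:ℝ) < γ - 1 := sub_pos.mpr hγ
  have hγ1' : γ - 1 ≠ 0 := ne_of_gt hγ1
  have hsγ : 0 < Real.sqrt γ := Real.sqrt_pos.mpr hγ0
  have hsq : Real.sqrt γ * Real.sqrt γ = γ := Real.mul_self_sqrt hγ0.le
  have haS : w q < Sig := hwS q hq
  have hs : 0 < (γ - 1) * (Sig - w q) / (Real.sqrt γ * (γ + 1)) :=
    div_pos (mul_pos hγ1 (sub_pos.mpr haS)) (mul_pos hsγ (by linarith))
  -- abbreviations
  set a : ℝ := w q with ha_def
  set s : ℝ := (γ - 1) * (Sig - a) / (Real.sqrt γ * (γ + 1)) with hs_def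
  have hP : 0 < gSW γ Sig a := Real.rpow_pos_of_pos hs _
  set P : ℝ := gSW γ Sig a with hP_def
  set X : ℝ := P ^ ((γ - 1) / 2) with hX_def
  have key1 : X = s := by
    rw [hX_def, hP_def]
    show ((s : ℝ) ^ (2 / (γ - 1))) ^ ((γ - 1) / 2) = s
    rw [← Real.rpow_mul hs.le]
    have he : 2 / (γ - 1) * ((γ - 1) / 2) = 1 := by field_simp
    rw [he, Real.rpow_one]
  set A : ℝ := hSW γ Sig a with hA_def
  have hA : A = Sig - 2 * Real.sqrt γ / (γ - 1) * X := rfl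
  have key2 : a = A - Real.sqrt γ * X := by
    rw [hA, key1, hs_def]
    field_simp
    ring
  have hXX : X * X = P ^ (γ - 1) := by
    rw [hX_def, ← Real.rpow_add hP]
    norm_num
  have hPp : P ^ ((γ - 1) / 2 - 1) * P = X := by
    rw [hX_def]
    calc P ^ ((γ - 1) / 2 - 1) * P = P ^ ((γ - 1) / 2 - 1) * P ^ (1:ℝ) := by
          rw [Real.rpow_one]
      _ = P ^ ((γ - 1) / 2 - 1 + 1) := (Real.rpow_add hP _ _).symm
      _ = P ^ ((γ - 1) / 2) := by norm_num
  -- derivative of w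
  have hwd : DifferentiableAt ℝ w q :=
    (hw.contDiffAt (hU.mem_nhds hq)).differentiableAt one_ne_zero
  set L := fderiv ℝ w q with hL_def
  have hwF : HasFDerivAt w L q := hwd.hasFDerivAt
  have ht1 : L (1, 0) + a * L (0, 1) = 0 := hpde q hq
  -- derivative of gSW
  have hlin : HasDerivAt (fun y => (γ - 1) * (Sig - y) / (Real.sqrt γ * (γ + 1)))
      ((γ - 1) * (-1) / (Real.sqrt γ * (γ + 1))) a :=
    (((hasDerivAt_id a).const_sub Sig).const_mul (γ - 1)).div_const _
  have hgd : HasDerivAt (gSW γ Sig)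
      ((γ - 1) * (-1) / (Real.sqrt γ * (γ + 1)) * (2 / (γ - 1)) * s ^ (2 / (γ - 1) - 1)) a :=
    hlin.rpow_const (Or.inl hs.ne')
  set G : ℝ := (γ - 1) * (-1) / (Real.sqrt γ * (γ + 1)) * (2 / (γ - 1)) * s ^ (2 / (γ - 1) - 1)
    with hG_def
  -- derivative of hSW
  have hgθ : HasDerivAt (fun y => (gSW γ Sig y) ^ ((γ - 1) / 2))
      (G * ((γ - 1) / 2) * P ^ ((γ - 1) / 2 - 1)) a :=
    hgd.rpow_const (Or.inl hP.ne')
  have hhd : HasDerivAt (hSW γ Sig)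
      (-(2 * Real.sqrt γ / (γ - 1) * (G * ((γ - 1) / 2) * P ^ ((γ - 1) / 2 - 1)))) a :=
    (hgθ.const_mul _).const_sub Sig
  set H : ℝ := -(2 * Real.sqrt γ / (γ - 1) * (G * ((γ - 1) / 2) * P ^ ((γ - 1) / 2 - 1)))
    with hH_def
  have hPH : P * H = -(Real.sqrt γ * X * G) := by
    rw [hH_def, ← hPp]
    field_simp
  -- derivative of gSW ^ γ  (rpow)
  have hpow : HasDerivAt (fun y => (gSW γ Sig y) ^ γ) (G * γ * P ^ (γ - 1)) a :=
    hgd.rpow_const (Or.inl hP.ne')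
  -- composites
  have hρF : HasFDerivAt (rhoSW γ Sig w) (G • L) q :=
    hgd.comp_hasFDerivAt q hwF
  have huF : HasFDerivAt (uSW γ Sig w) (H • L) q :=
    hhd.comp_hasFDerivAt q hwF
  have hFF : HasFDerivAt (fun z => rhoSW γ Sig w z * uSW γ Sig w z)
      ((G * A + P * H) • L) q :=
    (hgd.mul hhd).comp_hasFDerivAt q hwF
  have hQF : HasFDerivAt
      (fun z => rhoSW γ Sig w z * (uSW γ Sig w z) ^ 2 + (rhoSW γ Sig w z) ^ γ)
      ((G * A ^ 2 + P * ((2:ℕ) * A ^ 1 * H) + G * γ * P ^ (γ - 1)) • L) q :=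
    ((hgd.mul (hhd.pow 2)).add hpow).comp_hasFDerivAt q hwF
  refine ⟨hP, hρF.differentiableAt, huF.differentiableAt, ?_, ?_⟩
  · rw [hρF.fderiv, hFF.fderiv]
    simp only [ContinuousLinearMap.smul_apply, smul_eq_mul]
    clear_value a s P X A G H L
    linear_combination G * ht1 - G * L (0,1) * key2 + L (0,1) * hPH
  · rw [hFF.fderiv, hQF.fderiv]
    simp only [ContinuousLinearMap.smul_apply, smul_eq_mul]
    push_cast
    clear_value a s P X A G H L
    linear_combination (G * A + P * H) * ht1 - L (0,1) * (G * A + P * H) * key2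
      + L (0,1) * (A + Real.sqrt γ * X) * hPH
      - L (0,1) * G * (X * X) * hsq - L (0,1) * G * γ * hXX
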